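/- For every enumeration operator E, the class {A ∈ 2^ℕ : A′ ≤₁ E(A)} has Lebesgue measure 0 and is meager in Cantor space. -/

import Mathlib

/-- Codes for oracle Turing machines (partial functions recursive in an oracle). -/
inductive OCode : Type
  | zero : OCode
  | succ : OCode
  | left : OCode
  | right : OCode
  | oracle : OCode
  | pair : OCode → OCode → OCode
  | comp : OCode → OCode → OCode
  | prec : OCode → OCode → OCode
  | rfind' : OCode → OCode

namespace OCode

/-- Evaluation of an oracle code with oracle `O : ℕ → ℕ`. -/
def eval (O : ℕ → ℕ) : OCode → ℕ →. ℕ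
  | zero => pure 0
  | succ => fun n => Part.some (n + 1)
  | left => fun n => Part.some n.unpair.1
  | right => fun n => Part.some n.unpair.2
  | oracle => fun n => Part.some (O n)
  | pair cf cg => fun n => Nat.pair <$> eval O cf n <*> eval O cg n
  | comp cf cg => fun n => eval O cg n >>= eval O cf
  | prec cf cg =>
    Nat.unpaired fun a n =>
      n.rec (eval O cf a) fun y IH => do
        let i ← IH
        eval O cg (Nat.pair a (Nat.pair y i))
  | rfind' cf =>
    Nat.unpaired fun a m =>
      (Nat.rfind fun n => (fun m => m = 0) <$> eval O cf (Nat.pair a (n + m))).map (· + m)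

/-- A surjective numbering of oracle codes. -/
def ofNat : ℕ → OCode
  | 0 => zero
  | 1 => succ
  | 2 => left
  | 3 => right
  | 4 => oracle
  | n + 5 =>
    let m := n.div2.div2
    have hm : m < n + 5 := by
      simp only [m, Nat.div2_val]
      have : n / 2 / 2 ≤ n := le_trans (Nat.div_le_self _ _) (Nat.div_le_self _ _)
      omega
    have _m1 : m.unpair.1 < n + 5 := lt_of_le_of_lt m.unpair_left_le hm
    have _m2 : m.unpair.2 < n + 5 := lt_of_le_of_lt m.unpair_right_le hm
    match n.bodd, n.div2.bodd with
    | false, false => pair (ofNat m.unpair.1) (ofNat m.unpair.2)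
    | false, true => comp (ofNat m.unpair.1) (ofNat m.unpair.2)
    | true, false => prec (ofNat m.unpair.1) (ofNat m.unpair.2)
    | true, true => rfind' (ofNat m)
  decreasing_by
    all_goals first
      | exact _m1 | exact _m2 | exact hm
      | (simp_wf; first | exact _m1 | exact _m2 | exact hm)

end OCode

open Classical in
/-- The characteristic function of a set of naturals. -/
noncomputable def chi (A : Set ℕ) : ℕ → ℕ := fun n => if n ∈ A then 1 else 0

/-- The Turing jump `A′` of a set `A ⊆ ℕ`. -/
noncomputable def jump (A : Set ℕ) : Set ℕ :=
  {e | ((OCode.ofNat e).eval (chi A) e).Dom}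

/-- `A` is Turing reducible to `B`. -/
def TuringLE (A B : Set ℕ) : Prop :=
  ∃ c : OCode, ∀ n, c.eval (chi B) n = Part.some (chi A n)

/-- `A` is computably enumerable relative to `B`. -/
def CEIn (A B : Set ℕ) : Prop :=
  ∃ c : OCode, A = {n | (c.eval (chi B) n).Dom}

/-- The projection `π₁(B) = {x : ∃ y, ⟨x,y⟩ ∈ B}`; `B` is an enumeration of `π₁(B)`. -/
def proj1 (C : Set ℕ) : Set ℕ := {x | ∃ y, Nat.pair x y ∈ C}

/-- `E : 2^ℕ → 2^ℕ` is an enumeration operator: some Turing functional `Γ`, given any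
enumeration `C` of any set `A` as oracle, is total with values in `{0,1}` and computes
the characteristic function of an enumeration of `E(A)`. -/
def IsEnumOp (E : Set ℕ → Set ℕ) : Prop :=
  ∃ Γ : OCode, ∀ A C : Set ℕ, proj1 C = A →
    (∀ n, Γ.eval (chi C) n = Part.some 0 ∨ Γ.eval (chi C) n = Part.some 1) ∧
    proj1 {n | Γ.eval (chi C) n = Part.some 1} = E A
open MeasureTheory

/-- The fair-coin (Bernoulli(1/2) product) measure on Cantor space `ℕ → Bool`,
realized as the pushforward of Lebesgue measure on `[0,1)` under the binary-digit map. -/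
noncomputable def cantorMeasure : Measure (ℕ → Bool) :=
  Measure.map (fun x : ℝ => fun n : ℕ => decide (Nat.floor (x * 2 ^ (n + 1)) % 2 = 1))
    (volume.restrict (Set.Ico (0 : ℝ) 1))

/-- The subset of `ℕ` coded by a point of Cantor space. -/
def toSet (x : ℕ → Bool) : Set ℕ := {n | x n = true}

/-!
Let `eₚ` be an index of a machine that halts iff `p ∉ A`. If `f` is a computable 1-reduction of
`A′` to `E(A)`, then `p ∉ A ↔ f(eₚ) ∈ E(A)` for all `p`. Since `E` is monotone, the sets `A`
satisfying this for one fixed `f` form an antichain under `⊆`; since moreover `E` is continuous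
(use principle), the class is nowhere dense, and by Sperner's theorem applied on the `2^k` cylinders
of length `k` an antichain has measure at most `binom(k, k/2) / 2^k → 0`. There are only countably
many computable `f`.
-/

open Set Filter Topology ENNReal

/-! ### Oracle computations -/

theorem eventually_apply_eq_nhds {ι X : Type*} [TopologicalSpace X] [DiscreteTopology X]
    (x : ι → X) (i : ι) : ∀ᶠ y in 𝓝 x, y i = x i :=
  (continuous_apply i).continuousAt.eventually_mem ((isOpen_discrete {x i}).mem_nhds rfl)

theorem Nat.eventually_mem_rfind {α : Type*} {l : Filter α} {a₀ : α} {p : α → ℕ →. Bool}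
    (hp : ∀ m b, b ∈ p a₀ m → ∀ᶠ a in l, b ∈ p a m) {n : ℕ} (h : n ∈ Nat.rfind (p a₀)) :
    ∀ᶠ a in l, n ∈ Nat.rfind (p a) := by
  rw [Nat.mem_rfind] at h
  filter_upwards [hp _ _ h.1, (eventually_all_finite (finite_Iio n)).2 fun m hm => hp _ _ (h.2 hm)]
    with a hn hlt
  exact Nat.mem_rfind.2 ⟨hn, fun hm => hlt _ hm⟩

namespace OCode

/-- The use principle: a halting computation queries only finitely many oracle values. -/
theorem eventually_mem_eval (c : OCode) {O : ℕ → ℕ} {n v : ℕ} (h : v ∈ c.eval O n) :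
    ∀ᶠ O' in 𝓝 O, v ∈ c.eval O' n := by
  induction c generalizing n v with
  | zero | succ | left | right => exact .of_forall fun _ => h
  | oracle =>
    filter_upwards [eventually_apply_eq_nhds O n] with O' hO'
    simp_all [eval]
  | pair cf cg hf hg =>
    simp only [eval, Seq.seq, Part.mem_bind_iff, Part.map_eq_map, Part.mem_map_iff] at h ⊢
    obtain ⟨_, ⟨a, ha, rfl⟩, b, hb, rfl⟩ := h
    filter_upwards [hf ha, hg hb] with O' ha' hb'
    exact ⟨_, ⟨a, ha', rfl⟩, b, hb', rfl⟩
  | comp cf cg hf hg =>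
    obtain ⟨a, ha, hv⟩ := Part.mem_bind_iff.1 h
    filter_upwards [hg ha, hf hv] with O' ha' hv'
    exact Part.mem_bind_iff.2 ⟨a, ha', hv'⟩
  | prec cf cg hf hg =>
    revert h
    simp only [eval, Nat.unpaired]
    induction n.unpair.2 generalizing v with
    | zero => exact hf
    | succ k ih =>
      intro h
      obtain ⟨i, hi, hv⟩ := Part.mem_bind_iff.1 h
      filter_upwards [ih hi, hg hv] with O' hi' hv'
      exact Part.mem_bind_iff.2 ⟨i, hi', hv'⟩
  | rfind' cf hf =>
    simp only [eval, Nat.unpaired, Part.mem_map_iff] at h ⊢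
    obtain ⟨k, hk, rfl⟩ := h
    have hstep (m : ℕ) (b : Bool) (hb : b ∈ (fun m => decide (m = 0)) <$> cf.eval O m) :
        ∀ᶠ O' in 𝓝 O, b ∈ (fun m => decide (m = 0)) <$> cf.eval O' m := by
      obtain ⟨w, hw, rfl⟩ := (Part.mem_map_iff _).1 hb
      filter_upwards [hf hw] with O' hw'
      exact (Part.mem_map_iff _).2 ⟨w, hw', rfl⟩
    filter_upwards [Nat.eventually_mem_rfind (p := fun O' j =>
      (fun m => decide (m = 0)) <$> cf.eval O' (Nat.pair n.unpair.1 (j + n.unpair.2)))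
      (fun _ _ => hstep _ _) hk] with O' hk'
    exact ⟨k, hk', rfl⟩

theorem isOpen_setOf_exists_mem_eval (c : OCode) (v : ℕ) (g : ℕ → ℕ) :
    IsOpen {O : ℕ → ℕ | ∃ y, v ∈ c.eval O (g y)} :=
  isOpen_iff_mem_nhds.2 fun _ ⟨y, hy⟩ => (c.eventually_mem_eval hy).mono fun _ h => ⟨y, h⟩

protected def const : ℕ → OCode
  | 0 => zero
  | n + 1 => comp succ (OCode.const n)

@[simp] theorem eval_const (O : ℕ → ℕ) (n m : ℕ) : (OCode.const n).eval O m = Part.some n := by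
  induction n with
  | zero => rfl
  | succ n ih => simp [OCode.const, eval, ih]

def encode : OCode → ℕ
  | zero => 0
  | succ => 1
  | left => 2
  | right => 3
  | oracle => 4
  | pair cf cg => 2 * (2 * Nat.pair (encode cf) (encode cg)) + 5
  | comp cf cg => 2 * (2 * Nat.pair (encode cf) (encode cg) + 1) + 5
  | prec cf cg => (2 * (2 * Nat.pair (encode cf) (encode cg)) + 1) + 5
  | rfind' cf => (2 * (2 * encode cf + 1) + 1) + 5

theorem ofNat_encode (c : OCode) : ofNat (encode c) = c := by
  induction c <;> simp [encode, ofNat, Nat.div2_val, *]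

def haltsIfNotMem (p : ℕ) : OCode := rfind' (comp oracle (OCode.const p))

theorem eval_haltsIfNotMem_dom (O : ℕ → ℕ) (p n : ℕ) :
    ((haltsIfNotMem p).eval O n).Dom ↔ O p = 0 := by
  simp only [haltsIfNotMem, eval, Nat.unpaired, Part.map_Dom]
  exact Nat.rfind_dom.trans (by simp)

end OCode

theorem encode_haltsIfNotMem_mem_jump (A : Set ℕ) (p : ℕ) :
    (OCode.haltsIfNotMem p).encode ∈ jump A ↔ p ∉ A := by
  simp [jump, OCode.ofNat_encode, OCode.eval_haltsIfNotMem_dom, chi]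

/-! ### Enumeration operators -/

theorem tendsto_chi_nhds {ι : Type*} {l : Filter ι} {C : ι → Set ℕ} {D : Set ℕ}
    (h : ∀ n, ∀ᶠ u in l, n ∈ C u ↔ n ∈ D) : Tendsto (fun u => chi (C u)) l (𝓝 (chi D)) :=
  tendsto_pi_nhds.2 fun n => tendsto_const_nhds.congr' <| (h n).mono fun _ hu => by
    classical exact if_congr hu.symm rfl rfl

theorem toSet_mono : Monotone toSet := fun _ _ h n hn => Bool.le_iff_imp.1 (h n) hn

def canonEnum (A : Set ℕ) : Set ℕ := {m | m.unpair.1 ∈ A}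

theorem proj1_canonEnum (A : Set ℕ) : proj1 (canonEnum A) = A := by
  ext x
  exact ⟨fun ⟨y, hy⟩ => by simpa [canonEnum] using hy, fun hx => ⟨0, by simpa [canonEnum] using hx⟩⟩

theorem continuous_chi_canonEnum_toSet : Continuous fun x : ℕ → Bool => chi (canonEnum (toSet x)) :=
  continuous_iff_continuousAt.2 fun x => tendsto_chi_nhds fun n => by
    filter_upwards [eventually_apply_eq_nhds x n.unpair.1] with y hy
    simp [canonEnum, toSet, hy]

namespace IsEnumOp

variable {E : Set ℕ → Set ℕ}

theorem exists_isOpen_mem_iff (hE : IsEnumOp E) (m : ℕ) :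
    ∃ S : Set (ℕ → ℕ), IsOpen S ∧ ∀ C, m ∈ E (proj1 C) ↔ chi C ∈ S := by
  obtain ⟨Γ, hΓ⟩ := hE
  refine ⟨_, Γ.isOpen_setOf_exists_mem_eval 1 (Nat.pair m), fun C => ?_⟩
  rw [← (hΓ _ C rfl).2]
  simp only [proj1, mem_ofPred_eq, Part.eq_some_iff]

theorem monotone (hE : IsEnumOp E) : Monotone E := by
  intro A B hAB m hm
  obtain ⟨S, hS, hmem⟩ := hE.exists_isOpen_mem_iff m
  -- `C u` enumerates `B` and agrees with the canonical enumeration of `A` below `u`.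
  let C (u : ℕ) : Set ℕ := canonEnum A ∪ {q | q.unpair.1 ∈ B ∧ u ≤ q.unpair.2}
  have hC (u : ℕ) : proj1 (C u) = B := by
    ext x
    constructor
    · rintro ⟨y, hy | hy⟩
      · exact hAB (by simpa [canonEnum] using hy)
      · simpa using hy.1
    · exact fun hx => ⟨u, Or.inr (by simpa using hx)⟩
  have hlim : Tendsto (fun u => chi (C u)) atTop (𝓝 (chi (canonEnum A))) :=
    tendsto_chi_nhds fun n => (eventually_gt_atTop n).mono fun u hu => by
      simp only [C, mem_union, mem_ofPred_eq, or_iff_left_iff_imp]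
      exact fun h => absurd (h.2.trans (Nat.unpair_right_le n)) (not_le.2 hu)
  rw [← proj1_canonEnum A, hmem] at hm
  obtain ⟨u, hu⟩ := (hlim.eventually (hS.mem_nhds hm)).exists
  rw [← hC u, hmem]
  exact hu

theorem isOpen_setOf_mem (hE : IsEnumOp E) (m : ℕ) : IsOpen {x : ℕ → Bool | m ∈ E (toSet x)} := by
  obtain ⟨S, hS, hmem⟩ := hE.exists_isOpen_mem_iff m
  have hpre : {x : ℕ → Bool | m ∈ E (toSet x)} = (fun x => chi (canonEnum (toSet x))) ⁻¹' S := by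
    ext x
    rw [mem_preimage, ← hmem, proj1_canonEnum]
    rfl
  exact hpre ▸ hS.preimage continuous_chi_canonEnum_toSet

theorem isUpperSet_setOf_mem (hE : IsEnumOp E) (m : ℕ) :
    IsUpperSet {x : ℕ → Bool | m ∈ E (toSet x)} :=
  fun _ _ hxy hx => hE.monotone (toSet_mono hxy) hx

end IsEnumOp

theorem countable_setOf_computable : {f : ℕ → ℕ | Computable f}.Countable :=
  ((countable_range Nat.Partrec.Code.eval).preimage (f := fun f n => Part.some (f n))
    fun _ _ h => funext fun n => Part.some_injective (congrFun h n)).mono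
    fun _ hf => Nat.Partrec.Code.exists_code.1 (Partrec.nat_iff.1 hf)

/-! ### Classes coded by upper sets -/

def complCodedBy (U : ℕ → Set (ℕ → Bool)) : Set (ℕ → Bool) :=
  {x | ∀ p, x p = false ↔ x ∈ U p}

section complCodedBy

variable {U : ℕ → Set (ℕ → Bool)}

theorem isAntichain_complCodedBy (hU : ∀ p, IsUpperSet (U p)) :
    IsAntichain (· ≤ ·) (complCodedBy U) := by
  intro x hx y hy hne hxy
  refine hne (funext fun p => ?_)
  cases hxp : x p
  · exact ((hy p).2 (hU p hxy ((hx p).1 hxp))).symm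
  · exact (hxy p hxp).symm

theorem measurableSet_complCodedBy (hU : ∀ p, MeasurableSet (U p)) :
    MeasurableSet (complCodedBy U) := by
  rw [complCodedBy, ofPred_forall]
  exact MeasurableSet.iInter fun p => measurableSet_setOfPred.2 <|
    (measurableSet_setOfPred.1 (measurable_pi_apply p (measurableSet_singleton false))).iff
      (measurableSet_setOfPred.1 (hU p))

theorem tendsto_update_atTop_nhds {X : Type*} [TopologicalSpace X] (x : ℕ → X) (b : X) :
    Tendsto (fun p => Function.update x p b) atTop (𝓝 x) :=
  tendsto_pi_nhds.2 fun i => tendsto_const_nhds.congr' <|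
    (eventually_gt_atTop i).mono fun _ hp => (Function.update_of_ne hp.ne _ _).symm

theorem isNowhereDense_complCodedBy (hUo : ∀ p, IsOpen (U p)) (hUu : ∀ p, IsUpperSet (U p)) :
    IsNowhereDense (complCodedBy U) := by
  -- A point `y` of the class near `x` with a fresh coordinate `p` off lies in `U p`, so does
  -- `raise y` (`p` on), and a point of the class near `raise y` would have `p` both on and off.
  rw [IsNowhereDense, eq_empty_iff_forall_notMem]
  intro x hx
  set V := interior (closure (complCodedBy U))
  have hV : IsOpen V := isOpen_interior
  obtain ⟨p, hp_false, hp_true⟩ :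
      ∃ p, Function.update x p false ∈ V ∧ Function.update x p true ∈ V :=
    (((tendsto_update_atTop_nhds x false).eventually (hV.mem_nhds hx)).and
      ((tendsto_update_atTop_nhds x true).eventually (hV.mem_nhds hx))).exists
  set raise : (ℕ → Bool) → ℕ → Bool := fun z => Function.update z p true
  have hraise : Continuous raise := continuous_id.update p continuous_const
  have hcyl (b : Bool) : IsOpen {z : ℕ → Bool | z p = b} :=
    (isOpen_discrete {b}).preimage (continuous_apply (A := fun _ => Bool) p)
  obtain ⟨y, ⟨⟨hyV, hyp⟩, hy'V⟩, hyM⟩ :=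
    mem_closure_iff.1 (interior_subset hp_false) (V ∩ {z | z p = false} ∩ raise ⁻¹' V)
      ((hV.inter (hcyl false)).inter
        (hV.preimage hraise))
      ⟨⟨hp_false, by simp⟩, by simpa [raise] using hp_true⟩
  have hyU : y ∈ U p := (hyM p).1 hyp
  have hy'U : raise y ∈ U p :=
    hUu p (fun i => by by_cases hi : i = p <;> simp [raise, hi]) hyU
  obtain ⟨z, ⟨⟨-, hzU⟩, hzp⟩, hzM⟩ :=
    mem_closure_iff.1 (interior_subset hy'V) (V ∩ U p ∩ {z | z p = true})
      ((hV.inter (hUo p)).inter (hcyl true))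
      ⟨⟨hy'V, hy'U⟩, by simp [raise]⟩
  simp [(hzM p).2 hzU] at hzp

end complCodedBy

theorem setOf_oneOneReducible_jump_subset (E : Set ℕ → Set ℕ) :
    {x : ℕ → Bool | OneOneReducible (· ∈ jump (toSet x)) (· ∈ E (toSet x))} ⊆
      ⋃ f ∈ {f : ℕ → ℕ | Computable f},
        complCodedBy fun p => {x | f (OCode.haltsIfNotMem p).encode ∈ E (toSet x)} := by
  rintro x ⟨f, hf, -, hred⟩
  refine mem_iUnion₂.2 ⟨f, hf, fun p => ?_⟩
  simpa [toSet, encode_haltsIfNotMem_mem_jump] using hred (OCode.haltsIfNotMem p).encode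

/-! ### Antichains in Cantor space are null -/

theorem setLIntegral_Ico_zero_one_eq_sum_dyadic (g : ℝ → ℝ≥0∞) (k : ℕ) :
    ∫⁻ x in Ico 0 1, g x =
      (2 ^ k)⁻¹ * ∑ c ∈ Finset.range (2 ^ k), ∫⁻ u in Ico 0 1, g ((c + u) / 2 ^ k) := by
  have h2k : (0 : ℝ) < 2 ^ k := by positivity
  set a : ℕ → ℝ := fun c => c / 2 ^ k
  have ha : Monotone a := fun c c' h => by simp only [a]; gcongr
  have hunion : Ico (0 : ℝ) 1 = ⋃ c ∈ Finset.range (2 ^ k), Ico (a c) (a (c + 1)) := by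
    refine (Ico_subset_biUnion_Ico (2 ^ k) a |>.trans_eq' (by simp [a, h2k.ne'])).antisymm ?_
    refine iUnion₂_subset fun c hc => Ico_subset_Ico (by simp [a]; positivity) ?_
    calc a (c + 1) ≤ a (2 ^ k) := ha (Finset.mem_range.1 hc)
      _ = 1 := by simp [a, h2k.ne']
  have hdisj : (Finset.range (2 ^ k) : Set ℕ).PairwiseDisjoint fun c => Ico (a c) (a (c + 1)) :=
    fun c _ c' _ h => ha.pairwise_disjoint_on_Ico_succ h
  have himage (c : ℕ) : (fun u : ℝ => (2 ^ k)⁻¹ * u + a c) '' Ico 0 1 = Ico (a c) (a (c + 1)) := by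
    rw [image_affine_Ico (by positivity)]
    simp only [a]; congr 1 <;> push_cast <;> field_simp <;> ring
  nth_rw 1 [hunion]
  rw [lintegral_biUnion_finset hdisj (fun _ _ => measurableSet_Ico), Finset.mul_sum]
  refine Finset.sum_congr rfl fun c _ => ?_
  rw [← himage, lintegral_image_eq_lintegral_abs_deriv_mul (f := fun u => (2 ^ k)⁻¹ * u + a c)
    measurableSet_Ico (fun u _ => ((hasDerivAt_id' u).const_mul _ |>.add_const _).hasDerivWithinAt)
    (fun u _ v _ h => by simpa [h2k.ne'] using h), ← lintegral_const_mul' _ _ (by simp)]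
  refine setLIntegral_congr_fun measurableSet_Ico fun u _ => ?_
  simp only [mul_one, a]
  congr 1
  · rw [abs_of_pos (by positivity), ENNReal.ofReal_inv_of_pos h2k]; simp
  · congr 1; field_simp; ring

noncomputable def digitMap : ℝ → ℕ → Bool := fun x n => decide (⌊x * 2 ^ (n + 1)⌋₊ % 2 = 1)

def prependBits (k c : ℕ) (z : ℕ → Bool) : ℕ → Bool := fun n =>
  if n < k then c.testBit (k - 1 - n) else z (n - k)

theorem measurable_digitMap : Measurable digitMap :=
  measurable_pi_lambda _ fun _ =>
    (measurable_from_top (f := fun m : ℕ => decide (m % 2 = 1))).comp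
      (Nat.measurable_floor.comp (measurable_id.mul_const _))

theorem measurable_prependBits (k c : ℕ) : Measurable (prependBits k c) :=
  measurable_pi_lambda _ fun _ => by
    unfold prependBits
    split_ifs
    · exact measurable_const
    · exact measurable_pi_apply _

theorem digitMap_add_div_two_pow (k c : ℕ) {u : ℝ} (hu : u ∈ Ico (0 : ℝ) 1) :
    digitMap ((c + u) / 2 ^ k) = prependBits k c (digitMap u) := by
  obtain ⟨hu0, hu1⟩ := hu
  funext n
  unfold digitMap prependBits
  split_ifs with hn
  · have harith : (c + u) / 2 ^ k * 2 ^ (n + 1) = (c + u) / ((2 ^ (k - 1 - n) : ℕ) : ℝ) := by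
      rw [show k = (n + 1) + (k - 1 - n) by omega, pow_add]
      push_cast
      field_simp
      congr 2
      omega
    have hfloor : ⌊(c : ℝ) + u⌋₊ = c := by
      rw [add_comm, Nat.floor_add_natCast hu0, Nat.floor_eq_zero.2 hu1, zero_add]
    rw [harith, Nat.floor_div_natCast, hfloor, Nat.testBit_eq_decide_div_mod_eq]
  · have harith : (c + u) / 2 ^ k * 2 ^ (n + 1) =
        u * 2 ^ (n - k + 1) + ((2 * (c * 2 ^ (n - k)) : ℕ) : ℝ) := by
      rw [show n + 1 = k + (n - k + 1) by omega, pow_add]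
      push_cast
      field_simp
      ring
    rw [harith, Nat.floor_add_natCast (by positivity), Nat.add_mul_mod_self_left]

theorem cantorMeasure_apply {V : Set (ℕ → Bool)} (hV : MeasurableSet V) :
    cantorMeasure V = ∫⁻ x in Ico 0 1, V.indicator 1 (digitMap x) := by
  rw [show cantorMeasure = (volume.restrict (Ico 0 1)).map digitMap from rfl,
    Measure.map_apply measurable_digitMap hV, ← lintegral_indicator_one (measurable_digitMap hV)]
  rfl

theorem cantorMeasure_eq_sum_preimage_prependBits {W : Set (ℕ → Bool)} (hW : MeasurableSet W)
    (k : ℕ) :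
    cantorMeasure W =
      (2 ^ k)⁻¹ * ∑ c ∈ Finset.range (2 ^ k), cantorMeasure (prependBits k c ⁻¹' W) := by
  rw [cantorMeasure_apply hW, setLIntegral_Ico_zero_one_eq_sum_dyadic _ k]
  congr 1
  refine Finset.sum_congr rfl fun c _ => ?_
  rw [cantorMeasure_apply (measurable_prependBits k c hW)]
  refine setLIntegral_congr_fun measurableSet_Ico fun u hu => ?_
  rw [digitMap_add_div_two_pow k c hu]
  rfl

theorem prependBits_injOn (k : ℕ) (z : ℕ → Bool) :
    InjOn (prependBits k · z) (Iio (2 ^ k)) := by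
  intro c hc c' hc' h
  refine Nat.eq_of_testBit_eq fun i => ?_
  by_cases hi : i < k
  · simpa [prependBits, show k - 1 - i < k by omega, show k - 1 - (k - 1 - i) = i by omega]
      using congrFun h (k - 1 - i)
  · have hk : 2 ^ k ≤ 2 ^ i := Nat.pow_le_pow_right two_pos (not_lt.1 hi)
    rw [Nat.testBit_eq_false_of_lt ((mem_Iio.1 hc).trans_le hk),
      Nat.testBit_eq_false_of_lt ((mem_Iio.1 hc').trans_le hk)]

open Finset Classical in
theorem card_filter_prependBits_mem_le {W : Set (ℕ → Bool)} (hW : IsAntichain (· ≤ ·) W)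
    (k : ℕ) (z : ℕ → Bool) :
    #{c ∈ range (2 ^ k) | prependBits k c z ∈ W} ≤ k.choose (k / 2) := by
  set F := {c ∈ range (2 ^ k) | prependBits k c z ∈ W}
  let bits (c : ℕ) : Finset (Fin k) := {i | prependBits k c z i}
  have hmono {c c'} (h : bits c ⊆ bits c') : prependBits k c z ≤ prependBits k c' z := by
    intro n
    by_cases hn : n < k
    · simpa [bits, Bool.le_iff_imp] using @h ⟨n, hn⟩
    · simp [prependBits, hn]
  have heq {c c'} (hc : c ∈ F) (hc' : c' ∈ F) (h : bits c ⊆ bits c') : c = c' :=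
    prependBits_injOn k z (by simpa using (mem_filter.1 hc).1) (by simpa using (mem_filter.1 hc').1)
      (hW.eq (mem_filter.1 hc).2 (mem_filter.1 hc').2 (hmono h))
  have hinj : InjOn bits F := fun c hc c' hc' h => heq hc hc' h.subset
  have hanti : IsAntichain (· ⊆ ·) (F.image bits : Set (Finset (Fin k))) := by
    simp only [coe_image]
    rintro _ ⟨c, hc, rfl⟩ _ ⟨c', hc', rfl⟩ hne h
    exact hne (congrArg bits (heq hc hc' h))
  calc #F = #(F.image bits) := (card_image_of_injOn hinj).symm
    _ ≤ k.choose (k / 2) := by simpa using hanti.sperner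

instance : IsProbabilityMeasure cantorMeasure :=
  ⟨by simp [cantorMeasure_apply MeasurableSet.univ]⟩

theorem cantorMeasure_le_of_isAntichain {W : Set (ℕ → Bool)} (hWm : MeasurableSet W)
    (hW : IsAntichain (· ≤ ·) W) (k : ℕ) :
    cantorMeasure W ≤ k.choose (k / 2) / 2 ^ k := by
  have hpre (c : ℕ) : MeasurableSet (prependBits k c ⁻¹' W) := measurable_prependBits k c hWm
  have hsum :
      ∑ c ∈ Finset.range (2 ^ k), cantorMeasure (prependBits k c ⁻¹' W) ≤ k.choose (k / 2) :=
    calc ∑ c ∈ Finset.range (2 ^ k), cantorMeasure (prependBits k c ⁻¹' W)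
        = ∫⁻ z, ∑ c ∈ Finset.range (2 ^ k), (prependBits k c ⁻¹' W).indicator 1 z
            ∂cantorMeasure := by
          rw [lintegral_finsetSum _ fun c _ => measurable_one.indicator (hpre c)]
          simp_rw [lintegral_indicator_one (hpre _)]
      _ ≤ ∫⁻ _, (k.choose (k / 2) : ℝ≥0∞) ∂cantorMeasure := by
          refine lintegral_mono fun z => ?_
          classical
          simp only [indicator_apply, mem_preimage, Pi.one_apply]
          rw [Finset.sum_boole]
          exact_mod_cast card_filter_prependBits_mem_le hW k z
      _ = k.choose (k / 2) := by simp
  rw [cantorMeasure_eq_sum_preimage_prependBits hWm k, ENNReal.div_eq_inv_mul]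
  gcongr

theorem Nat.centralBinom_sq_mul_le (n : ℕ) : n.centralBinom ^ 2 * (2 * n + 1) ≤ 16 ^ n := by
  induction n with
  | zero => simp
  | succ n ih =>
    have hrec := Nat.succ_mul_centralBinom_succ n
    refine Nat.le_of_mul_le_mul_left ?_ (by positivity : 0 < (n + 1) ^ 2)
    calc (n + 1) ^ 2 * ((n + 1).centralBinom ^ 2 * (2 * (n + 1) + 1))
        = (2 * (2 * n + 1) * n.centralBinom) ^ 2 * (2 * n + 3) := by rw [← hrec]; ring
      _ = 4 * ((2 * n + 1) * (2 * n + 3)) * (n.centralBinom ^ 2 * (2 * n + 1)) := by ring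
      _ ≤ 4 * (4 * (n + 1) ^ 2) * 16 ^ n := Nat.mul_le_mul (Nat.mul_le_mul_left 4 (by nlinarith)) ih
      _ = (n + 1) ^ 2 * 16 ^ (n + 1) := by ring

theorem cantorMeasure_eq_zero_of_isAntichain {W : Set (ℕ → Bool)} (hWm : MeasurableSet W)
    (hW : IsAntichain (· ≤ ·) W) : cantorMeasure W = 0 := by
  have hsq (n : ℕ) : cantorMeasure W ^ 2 ≤ ((2 * n + 1 : ℕ) : ℝ≥0∞)⁻¹ := by
    have h := cantorMeasure_le_of_isAntichain hWm hW (2 * n)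
    rw [show 2 * n / 2 = n by omega, ← Nat.centralBinom_eq_two_mul_choose] at h
    rw [ENNReal.le_inv_iff_mul_le]
    calc cantorMeasure W ^ 2 * ((2 * n + 1 : ℕ) : ℝ≥0∞)
        ≤ (n.centralBinom / 2 ^ (2 * n)) ^ 2 * ((2 * n + 1 : ℕ) : ℝ≥0∞) := by gcongr
      _ = ((n.centralBinom ^ 2 * (2 * n + 1) : ℕ) : ℝ≥0∞) / 16 ^ n := by
          rw [div_eq_mul_inv, div_eq_mul_inv, mul_pow, ← ENNReal.inv_pow, ← pow_mul,
            show 2 * n * 2 = 4 * n by ring, pow_mul]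
          push_cast
          norm_num
          ring
      _ ≤ 1 := ENNReal.div_le_of_le_mul (by rw [one_mul]; exact_mod_cast n.centralBinom_sq_mul_le)
  have : cantorMeasure W ^ 2 ≤ 0 := ge_of_tendsto' ENNReal.tendsto_inv_nat_nhds_zero
    fun n => (hsq n).trans (ENNReal.inv_le_inv.2 (by gcongr; omega))
  exact pow_eq_zero_iff two_ne_zero |>.1 (nonpos_iff_eq_zero.1 this)

/-- For every enumeration operator `E`, the class `{A ∈ 2^ℕ : A′ ≤₁ E(A)}` has Lebesgue
measure `0` and is meager in Cantor space. -/
theorem jump_one_reducible_to_enumOp_null_and_meagre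
    (E : Set ℕ → Set ℕ) (hE : IsEnumOp E) :
    cantorMeasure {x : ℕ → Bool | OneOneReducible (· ∈ jump (toSet x)) (· ∈ E (toSet x))} = 0 ∧
    IsMeagre {x : ℕ → Bool | OneOneReducible (· ∈ jump (toSet x)) (· ∈ E (toSet x))} := by
  have hsub := setOf_oneOneReducible_jump_subset E
  set U : (ℕ → ℕ) → ℕ → Set (ℕ → Bool) :=
    fun f p => {x | f (OCode.haltsIfNotMem p).encode ∈ E (toSet x)}
  have hopen (f : ℕ → ℕ) (p : ℕ) : IsOpen (U f p) := hE.isOpen_setOf_mem _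
  have hupper (f : ℕ → ℕ) (p : ℕ) : IsUpperSet (U f p) := hE.isUpperSet_setOf_mem _
  constructor
  · refine measure_mono_null hsub <| (measure_biUnion_null_iff countable_setOf_computable).2
      fun f _ => cantorMeasure_eq_zero_of_isAntichain ?_ (isAntichain_complCodedBy (hupper f))
    exact measurableSet_complCodedBy fun p => (hopen f p).measurableSet
  · exact (isMeagre_biUnion countable_setOf_computable fun f _ =>
      (isNowhereDense_complCodedBy (hopen f) (hupper f)).isMeagre).mono hsub
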